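/- Assume ω_{134} ≠ ω_{234}, and let B be a symmetric ℂ-bilinear form on U with B(v_{12}, v_{34}) = 0 and B(v_{13}, v_{24}) = 0. Set f = α_{12} v_{12} + α_{34} v_{34}, where α_{12} = s_{123} s_{124} s_{125} s_{345} and α_{34} = s_{125} s_{134} s_{234} s_{345}. Then B(f, f) = 0. -/

import Mathlib

/-!
Eliminating `v₁₄` and `v₂₃` with the vertex relations turns the last relation into
`ω₁₂₄ v₁₂ + (ω₁₃₄ - ω₂₃₄) v₁₃ + ω₂₃₄ v₃₄ = 0`, and the cocycle identity
`ω₁₂₃ - ω₁₂₄ + ω₁₃₄ - ω₂₃₄ = 0` rewrites it as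
`ω₁₂₃ v₁₂ + (ω₁₃₄ - ω₂₃₄) v₂₄ + ω₁₃₄ v₃₄ = 0`. Pairing the two by `B` and using
`B(v₁₃, v₂₄) = 0 = B(v₁₂, v₃₄)` gives `ω₁₂₃ω₁₂₄ B(v₁₂, v₁₂) + ω₁₃₄ω₂₃₄ B(v₃₄, v₃₄) = 0`.
Since `α₁₂² = (s₁₂₅s₃₄₅)² ω₁₂₃ω₁₂₄` and `α₃₄² = (s₁₂₅s₃₄₅)² ω₁₃₄ω₂₃₄`, `B(f, f)` is
`(s₁₂₅s₃₄₅)²` times this quantity.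
-/

theorem LinearMap.apply_smul_add_smul_of_orthogonal {R M : Type*} [CommRing R]
    [AddCommGroup M] [Module R M] (B : M →ₗ[R] M →ₗ[R] R) {x y : M}
    (hxy : B x y = 0) (hyx : B y x = 0) (a b c d : R) :
    B (a • x + b • y) (c • x + d • y) = a * c * B x x + b * d * B y y := by
  simp only [map_add, map_smul, add_apply, smul_apply, smul_eq_mul, hxy, hyx]
  ring

section CycleRelations

variable {R M : Type*} [CommRing R] [AddCommGroup M] [Module R M]
  {ν12 ν13 ν14 ν23 ν24 ν34 ω123 ω124 ω134 ω234 : R} {v12 v13 v14 v23 v24 v34 : M}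

theorem cycle_relation_v12_v13_v34
    (hω124 : ω124 = ν24 - ν14 + ν12) (hω134 : ω134 = ν34 - ν14 + ν13)
    (hω234 : ω234 = ν34 - ν24 + ν23)
    (h1 : v12 + v13 + v14 = 0) (h2 : -v12 + v23 + v24 = 0) (h3 : -v13 - v23 + v34 = 0)
    (h5 : ν12 • v12 + ν13 • v13 + ν14 • v14 + ν23 • v23 + ν24 • v24 + ν34 • v34 = 0) :
    ω124 • v12 + (ω134 - ω234) • v13 + ω234 • v34 = 0 := by
  subst hω124 hω134 hω234
  linear_combination (norm := module) h5 - ν14 • h1 - ν24 • h2 + (ν23 - ν24) • h3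

theorem cycle_relation_v12_v24_v34
    (hω123 : ω123 = ν23 - ν13 + ν12) (hω124 : ω124 = ν24 - ν14 + ν12)
    (hω134 : ω134 = ν34 - ν14 + ν13) (hω234 : ω234 = ν34 - ν24 + ν23)
    (h1 : v12 + v13 + v14 = 0) (h2 : -v12 + v23 + v24 = 0) (h3 : -v13 - v23 + v34 = 0)
    (h5 : ν12 • v12 + ν13 • v13 + ν14 • v14 + ν23 • v23 + ν24 • v24 + ν34 • v34 = 0) :
    ω123 • v12 + (ω134 - ω234) • v24 + ω134 • v34 = 0 := by
  have hcocycle : ω123 = ω124 - ω134 + ω234 := by rw [hω123, hω124, hω134, hω234]; ring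
  linear_combination (norm := module)
    cycle_relation_v12_v13_v34 hω124 hω134 hω234 h1 h2 h3 h5 + hcocycle • v12 +
      (ω134 - ω234) • (h2 + h3)

end CycleRelations

theorem opposite_pair_combination_isotropic
    (U : Type*) [AddCommGroup U] [Module ℂ U]
    (ν12 ν13 ν14 ν23 ν24 ν34 : ℂ)
    (ω123 ω124 ω134 ω234 : ℂ)
    (hω123 : ω123 = ν23 - ν13 + ν12) (hω124 : ω124 = ν24 - ν14 + ν12)
    (hω134 : ω134 = ν34 - ν14 + ν13) (hω234 : ω234 = ν34 - ν24 + ν23)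
    (s123 s124 s125 s134 s234 s345 : ℂ)
    (hs123 : s123 ^ 2 = ω123) (hs124 : s124 ^ 2 = ω124) (hs134 : s134 ^ 2 = ω134)
    (hs234 : s234 ^ 2 = ω234)
    (v12 v13 v14 v23 v24 v34 : U)
    (h1 : v12 + v13 + v14 = 0) (h2 : -v12 + v23 + v24 = 0)
    (h3 : -v13 - v23 + v34 = 0)
    (h5 : ν12 • v12 + ν13 • v13 + ν14 • v14 + ν23 • v23 + ν24 • v24 + ν34 • v34 = 0)
    (B : U →ₗ[ℂ] U →ₗ[ℂ] ℂ) (hsym : ∀ u v, B u v = B v u)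
    (horth1 : B v12 v34 = 0) (horth2 : B v13 v24 = 0)
    (f : U) (hf : f = (s123 * s124 * s125 * s345) • v12 + (s125 * s134 * s234 * s345) • v34) :
    B f f = 0 := by
  have horth1' : B v34 v12 = 0 := (hsym _ _).trans horth1
  have hv13 : (ω134 - ω234) • v13 = (-ω124) • v12 + (-ω234) • v34 := by
    linear_combination (norm := module) cycle_relation_v12_v13_v34 hω124 hω134 hω234 h1 h2 h3 h5
  have hv24 : (ω134 - ω234) • v24 = (-ω123) • v12 + (-ω134) • v34 := by
    linear_combination (norm := module)
      cycle_relation_v12_v24_v34 hω123 hω124 hω134 hω234 h1 h2 h3 h5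
  have key : ω123 * ω124 * B v12 v12 + ω134 * ω234 * B v34 v34 = 0 := by
    have h0 : B ((ω134 - ω234) • v13) ((ω134 - ω234) • v24) = 0 := by
      simp only [map_smul, LinearMap.smul_apply, horth2, smul_zero]
    rw [hv13, hv24, B.apply_smul_add_smul_of_orthogonal horth1 horth1'] at h0
    linear_combination h0
  calc B f f = (s125 * s345) ^ 2 *
        (s123 ^ 2 * s124 ^ 2 * B v12 v12 + s134 ^ 2 * s234 ^ 2 * B v34 v34) := by
        rw [hf, B.apply_smul_add_smul_of_orthogonal horth1 horth1']; ring
    _ = 0 := by rw [hs123, hs124, hs134, hs234, key, mul_zero]
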